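/- arXiv:2311.09992 — 2 statements merged into one kernel-verified Lean document; each statement's English description precedes it below -/
import Mathlib

section
/- (Total mass one, Theorem 2.2, second part) For every real number q with q > 0 and q ≠ 1 and every parameter tuple (n,m,k,l) as in the context, one has Σ_{x=0}^{m} p(x;q) = 1. -/
open Finset

/-- The `q`-integer `[j]_q = 1 + q + ⋯ + q^(j-1)`. -/
noncomputable def qint (q : ℝ) (j : ℕ) : ℝ := ∑ i ∈ Finset.range j, q ^ i

/-- The `q`-factorial `[j]_q! = [1]_q [2]_q ⋯ [j]_q`. -/
noncomputable def qfact (q : ℝ) (j : ℕ) : ℝ := ∏ i ∈ Finset.range j, qint q (i + 1)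

/-- The `q`-binomial coefficient `C_q(a,b)`. -/
noncomputable def qbinom (q : ℝ) (a b : ℕ) : ℝ :=
  if b ≤ a then qfact q a / (qfact q b * qfact q (a - b)) else 0

/-- The `q`-Pochhammer symbol `(a;q)_r = (1-a)(1-aq)⋯(1-aq^(r-1))`. -/
noncomputable def qpoch (a q : ℝ) (r : ℕ) : ℝ := ∏ i ∈ Finset.range r, (1 - a * q ^ i)

/-- The `r`-th term of the terminating balanced `₄φ₃`-series with numerator parameters
`q^a, q^b, q^(-M), q^(-N)`, denominator parameters `q^(-m), q^(m-n), q^(-M-N)`,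
base `q` and argument `q`. -/
noncomputable def hypTerm (q : ℝ) (n m M N : ℕ) (a b : ℤ) (r : ℕ) : ℝ :=
  (qpoch (q ^ a) q r * qpoch (q ^ b) q r * qpoch (q ^ (-(M : ℤ))) q r *
      qpoch (q ^ (-(N : ℤ))) q r * q ^ r) /
    (qpoch q q r * qpoch (q ^ (-(m : ℤ))) q r * qpoch (q ^ ((m : ℤ) - n)) q r *
      qpoch (q ^ (-(M : ℤ) - N)) q r)

/-- The function `p(x;q)` of Definition 1.1 (in its `₄φ₃`-series form), with
`M = m - l` and `N = n - m - k + l`. -/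
noncomputable def pq (q : ℝ) (n m k l x : ℕ) : ℝ :=
  qbinom q (n - k) (m - l) * (qbinom q n x / qbinom q n m) * q ^ x *
    (qint q (n - 2 * x + 1) / qint q (n - x + 1)) *
    ∑ r ∈ Finset.range (min x (min (m - l) (n + l - m - k)) + 1),
      hypTerm q n m (m - l) (n + l - m - k) (-(x : ℤ)) ((x : ℤ) - n - 1) r

section Aux
variable {q : ℝ}

lemma qint_pos (hq : 0 < q) (j : ℕ) : 0 < qint q (j + 1) := by
  apply Finset.sum_pos (fun i _ => pow_pos hq i)
  exact ⟨0, Finset.mem_range.2 (Nat.succ_pos j)⟩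

lemma qint_ne_zero (hq : 0 < q) {j : ℕ} (hj : 1 ≤ j) : qint q j ≠ 0 := by
  obtain ⟨j, rfl⟩ := Nat.exists_eq_add_of_le hj
  rw [add_comm]
  exact ne_of_gt (qint_pos hq j)

lemma qint_mul (j : ℕ) : qint q j * (q - 1) = q ^ j - 1 := geom_sum_mul q j

lemma qint_split (s t : ℕ) : qint q (s + t) = qint q s + q ^ s * qint q t := by
  unfold qint
  rw [Finset.sum_range_add]
  simp [pow_add, Finset.mul_sum]

lemma qfact_succ (j : ℕ) : qfact q (j + 1) = qfact q j * qint q (j + 1) :=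
  Finset.prod_range_succ _ _

lemma qfact_pos (hq : 0 < q) (j : ℕ) : 0 < qfact q j :=
  Finset.prod_pos (fun i _ => qint_pos hq i)

lemma qfact_ne_zero (hq : 0 < q) (j : ℕ) : qfact q j ≠ 0 := ne_of_gt (qfact_pos hq j)

lemma qbinom_of_le {a b : ℕ} (h : b ≤ a) :
    qbinom q a b = qfact q a / (qfact q b * qfact q (a - b)) := if_pos h

lemma qbinom_of_gt {a b : ℕ} (h : a < b) : qbinom q a b = 0 := if_neg (by omega)

lemma qbinom_zero (hq : 0 < q) (a : ℕ) : qbinom q a 0 = 1 := by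
  rw [qbinom_of_le (Nat.zero_le a)]
  simp only [Nat.sub_zero]
  rw [show qfact q 0 = 1 from rfl, one_mul, div_self (qfact_ne_zero hq a)]

lemma qbinom_self (hq : 0 < q) (a : ℕ) : qbinom q a a = 1 := by
  rw [qbinom_of_le le_rfl]
  simp only [Nat.sub_self]
  rw [show qfact q 0 = 1 from rfl, mul_one, div_self (qfact_ne_zero hq a)]

lemma qbinom_pos (hq : 0 < q) {a b : ℕ} (h : b ≤ a) : 0 < qbinom q a b := by
  rw [qbinom_of_le h]
  exact div_pos (qfact_pos hq _) (mul_pos (qfact_pos hq _) (qfact_pos hq _))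

lemma qbinom_ne_zero (hq : 0 < q) {a b : ℕ} (h : b ≤ a) : qbinom q a b ≠ 0 :=
  ne_of_gt (qbinom_pos hq h)


lemma pascal1 (hq : 0 < q) (a b : ℕ) :
    qbinom q (a + 1) (b + 1) = qbinom q a (b + 1) + q ^ (a - b) * qbinom q a b := by
  rcases lt_or_ge a b with h | h
  · rw [qbinom_of_gt (by omega), qbinom_of_gt (by omega), qbinom_of_gt h]
    ring
  rcases eq_or_lt_of_le h with rfl | h'
  · rw [qbinom_self hq, qbinom_self hq, qbinom_of_gt (by omega), Nat.sub_self]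
    ring
  · -- b + 1 ≤ a
    have hb1 : b + 1 ≤ a := h'
    rw [qbinom_of_le (by omega), qbinom_of_le hb1, qbinom_of_le h]
    have e1 : a + 1 - (b + 1) = a - b := by omega
    have e2 : a - b = (a - b - 1) + 1 := by omega
    rw [e1, qfact_succ a, e2, qfact_succ (a - b - 1), ← e2]
    have e3 : a - (b + 1) = a - b - 1 := by omega
    rw [e3]
    have hsplit : qint q (a + 1) = qint q (a - b) + q ^ (a - b) * qint q (b + 1) := by
      rw [← qint_split]
      congr 1
      omega
    rw [hsplit]
    have h1 := qfact_ne_zero hq a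
    have h2 := qfact_ne_zero hq b
    have h3 := qfact_ne_zero hq (a - b - 1)
    have h4 := qfact_ne_zero hq (b + 1)
    have h5 : qint q (a - b) ≠ 0 := by
      have : a - b = (a - b - 1) + 1 := by omega
      rw [this]; exact ne_of_gt (qint_pos hq _)
    have h6 : qint q (b + 1) ≠ 0 := ne_of_gt (qint_pos hq _)
    rw [qfact_succ b]
    field_simp

lemma pascal2 (hq : 0 < q) (a b : ℕ) :
    qbinom q (a + 1) (b + 1) = q ^ (b + 1) * qbinom q a (b + 1) + qbinom q a b := by
  rcases lt_or_ge a b with h | h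
  · rw [qbinom_of_gt (by omega), qbinom_of_gt (by omega), qbinom_of_gt h]
    ring
  rcases eq_or_lt_of_le h with rfl | h'
  · rw [qbinom_self hq, qbinom_self hq, qbinom_of_gt (by omega)]
    ring
  · have hb1 : b + 1 ≤ a := h'
    rw [qbinom_of_le (by omega), qbinom_of_le hb1, qbinom_of_le h]
    have e1 : a + 1 - (b + 1) = a - b := by omega
    have e2 : a - b = (a - b - 1) + 1 := by omega
    rw [e1, qfact_succ a, e2, qfact_succ (a - b - 1), ← e2]
    have e3 : a - (b + 1) = a - b - 1 := by omega
    rw [e3]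
    have hsplit : qint q (a + 1) = qint q (b + 1) + q ^ (b + 1) * qint q (a - b) := by
      rw [← qint_split]
      congr 1
      omega
    rw [hsplit]
    have h1 := qfact_ne_zero hq a
    have h2 := qfact_ne_zero hq b
    have h3 := qfact_ne_zero hq (a - b - 1)
    have h4 := qfact_ne_zero hq (b + 1)
    have h5 : qint q (a - b) ≠ 0 := by
      have : a - b = (a - b - 1) + 1 := by omega
      rw [this]; exact ne_of_gt (qint_pos hq _)
    have h6 : qint q (b + 1) ≠ 0 := ne_of_gt (qint_pos hq _)
    rw [qfact_succ b]
    field_simp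
    ring

lemma qbinom_succ_mul (hq : 0 < q) {n m : ℕ} (h : m < n) :
    qbinom q n (m + 1) * qint q (m + 1) = qbinom q n m * qint q (n - m) := by
  rw [qbinom_of_le h, qbinom_of_le h.le]
  have e2 : n - m = (n - m - 1) + 1 := by omega
  have e3 : n - (m + 1) = n - m - 1 := by omega
  rw [e3, e2, qfact_succ (n - m - 1), qfact_succ m, ← e2]
  have h1 := qfact_ne_zero hq n
  have h2 := qfact_ne_zero hq m
  have h3 := qfact_ne_zero hq (n - m - 1)
  have h5 : qint q (n - m) ≠ 0 := by
    rw [e2]; exact ne_of_gt (qint_pos hq _)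
  have h6 : qint q (m + 1) ≠ 0 := ne_of_gt (qint_pos hq _)
  field_simp

lemma tri (r : ℕ) : r * (r + 1) / 2 = r * (r - 1) / 2 + r := by
  rcases r with _ | s
  · simp
  · simp only [Nat.succ_sub_one]
    obtain ⟨u, hu⟩ := Nat.even_mul_succ_self (s + 1)
    obtain ⟨v, hv⟩ := Nat.even_mul_succ_self s
    have h3 : (s + 1) * (s + 1 + 1) = s * (s + 1) + 2 * (s + 1) := by ring
    have h4 : (s + 1) * s = s * (s + 1) := by ring
    rw [h4]
    omega


lemma diffGU (hq : 0 < q) (S K r : ℕ) :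
    ((-1 : ℝ)) ^ r * q ^ (r * (r + 1) / 2) * qbinom q (S + 1) r * qbinom q (K + S + 2 - r) (S + 1)
      - ((-1 : ℝ)) ^ r * q ^ (r * (r + 1) / 2) * qbinom q (S + 1) r *
        qbinom q (K + S + 1 - r) (S + 1) =
    q ^ (K + 1) * (((-1 : ℝ)) ^ r * q ^ (r * (r - 1) / 2) * qbinom q (S + 1) r *
      qbinom q (K + S + 1 - r) S) := by
  rcases le_or_gt r (S + 1) with hrS | hrS
  · have e1 : K + S + 2 - r = (K + S + 1 - r) + 1 := by omega
    rw [e1, pascal1 hq (K + S + 1 - r) S]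
    rcases le_or_gt r (K + 1) with hc | hc
    · have e2 : K + S + 1 - r - S = K + 1 - r := by omega
      rw [e2]
      have e3 : q ^ (r * (r + 1) / 2) * q ^ (K + 1 - r) = q ^ (K + 1) * q ^ (r * (r - 1) / 2) := by
        rw [← pow_add, ← pow_add]
        congr 1
        have := tri r
        omega
      calc ((-1 : ℝ)) ^ r * q ^ (r * (r + 1) / 2) * qbinom q (S + 1) r *
            (qbinom q (K + S + 1 - r) (S + 1) + q ^ (K + 1 - r) * qbinom q (K + S + 1 - r) S) -
          (-1 : ℝ) ^ r * q ^ (r * (r + 1) / 2) * qbinom q (S + 1) r *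
            qbinom q (K + S + 1 - r) (S + 1)
          = (q ^ (r * (r + 1) / 2) * q ^ (K + 1 - r)) * ((-1 : ℝ)) ^ r * qbinom q (S + 1) r *
            qbinom q (K + S + 1 - r) S := by ring
        _ = _ := by rw [e3]; ring
    · have hz : qbinom q (K + S + 1 - r) S = 0 := qbinom_of_gt (by omega)
      rw [hz]
      ring
  · have hz : qbinom q (S + 1) r = 0 := qbinom_of_gt (by omega)
    rw [hz]
    ring

lemma lemB (hq : 0 < q) : ∀ S K : ℕ,
    ∑ r ∈ range (S + 2), ((-1 : ℝ)) ^ r * q ^ (r * (r - 1) / 2) * qbinom q (S + 1) r *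
      qbinom q (K + S + 1 - r) S = 0 := by
  intro S
  induction S with
  | zero =>
    intro K
    rw [show (0:ℕ) + 2 = 2 by rfl, Finset.sum_range_succ, Finset.sum_range_succ,
      Finset.sum_range_zero]
    simp [qbinom_zero hq, qbinom_self hq]
  | succ S ih =>
    intro K
    set f : ℕ → ℝ := fun r => ((-1 : ℝ)) ^ r * q ^ (r * (r - 1) / 2) * qbinom q (S + 2) r *
      qbinom q (K + S + 2 - r) (S + 1) with hf
    set g : ℕ → ℝ := fun r => ((-1 : ℝ)) ^ r * q ^ (r * (r + 1) / 2) * qbinom q (S + 1) r *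
      qbinom q (K + S + 2 - r) (S + 1) with hg
    set u : ℕ → ℝ := fun s => ((-1 : ℝ)) ^ s * q ^ (s * (s + 1) / 2) * qbinom q (S + 1) s *
      qbinom q (K + S + 1 - s) (S + 1) with hu
    have claim1 : ∀ s ∈ range (S + 2), f (s + 1) = g (s + 1) - u s := by
      intro s hs
      simp only [hf, hg, hu]
      rw [pascal2 hq (S + 1) s]
      have e1 : K + S + 2 - (s + 1) = K + S + 1 - s := by omega
      rw [e1]
      have e2 : (s + 1) * (s + 1 - 1) / 2 = s * (s + 1) / 2 := by
        simp only [Nat.add_sub_cancel]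
        rw [Nat.mul_comm]
      have e3 : (s + 1) * (s + 1 + 1) / 2 = s * (s + 1) / 2 + (s + 1) := by
        have h := tri (s + 1)
        simp only [Nat.add_sub_cancel] at h
        rwa [Nat.mul_comm (s+1) s] at h
      rw [e2, e3, pow_add, pow_succ]
      ring
    have step1 : ∑ r ∈ range (S + 3), f r = f 0 + ∑ s ∈ range (S + 2), (g (s + 1) - u s) := by
      rw [Finset.sum_range_succ' f (S + 2)]
      rw [Finset.sum_congr rfl claim1]
      ring
    have step2 : ∑ s ∈ range (S + 2), g (s + 1) = ∑ r ∈ range (S + 2), g r + g (S + 2) - g 0 := by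
      have := Finset.sum_range_succ' g (S + 2)
      have h2 := Finset.sum_range_succ g (S + 2)
      -- sum over range (S+3) = Σ g(s+1) over range(S+2) + g 0  = Σ range(S+2) + g(S+2)
      rw [h2] at this
      linarith [this]
    have hgS2 : g (S + 2) = 0 := by
      simp only [hg]
      rw [qbinom_of_gt (by omega : S + 1 < S + 2)]
      ring
    have hg0 : g 0 = f 0 := by simp [hg, hf, qbinom_zero hq]
    have claim2 : ∀ r ∈ range (S + 2), g r - u r =
        q ^ (K + 1) * (((-1 : ℝ)) ^ r * q ^ (r * (r - 1) / 2) * qbinom q (S + 1) r *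
          qbinom q (K + S + 1 - r) S) := by
      intro r hr
      simp only [hg, hu]
      exact diffGU hq S K r
    have step3 : ∑ r ∈ range (S + 2), (g r - u r) = 0 := by
      rw [Finset.sum_congr rfl claim2, ← Finset.mul_sum]
      have e4 : ∀ r ∈ range (S + 2), ((-1 : ℝ)) ^ r * q ^ (r * (r - 1) / 2) * qbinom q (S + 1) r *
          qbinom q (K + S + 1 - r) S = ((-1 : ℝ)) ^ r * q ^ (r * (r - 1) / 2) *
          qbinom q (S + 1) r * qbinom q (K + S + 1 - r) S := fun _ _ => rfl
      rw [ih K]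
      ring
    show ∑ r ∈ range (S + 1 + 2), f r = 0
    rw [show S + 1 + 2 = S + 3 by omega, step1]
    have : ∑ s ∈ range (S + 2), (g (s + 1) - u s) =
        (∑ s ∈ range (S + 2), g (s + 1)) - ∑ s ∈ range (S + 2), u s := by
      rw [Finset.sum_sub_distrib]
    rw [this, step2, hgS2, hg0]
    have : ∑ r ∈ range (S + 2), g r - ∑ s ∈ range (S + 2), u s =
        ∑ r ∈ range (S + 2), (g r - u r) := (Finset.sum_sub_distrib _ _).symm
    linarith [step3, this.symm ▸ step3]

lemma lemA (hq : 0 < q) (N K : ℕ) :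
    ∑ r ∈ range (N + 1), ((-1 : ℝ)) ^ r * q ^ (r * (r + 1) / 2) * qbinom q N r *
      qbinom q (K + N - r) N = 1 := by
  rcases N with _ | S
  · simp [qbinom_zero hq]
  · induction K with
    | zero =>
      rw [Finset.sum_eq_single_of_mem 0 (Finset.mem_range.2 (by omega))]
      · simp [qbinom_zero hq, qbinom_self hq]
      · intro r hr hr0
        have hz : qbinom q (0 + (S + 1) - r) (S + 1) = 0 := qbinom_of_gt (by omega)
        rw [hz]
        ring
    | succ K ihK =>
      have hdiff : ∑ r ∈ range (S + 2),
          (((-1 : ℝ)) ^ r * q ^ (r * (r + 1) / 2) * qbinom q (S + 1) r *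
            qbinom q (K + 1 + (S + 1) - r) (S + 1)
          - ((-1 : ℝ)) ^ r * q ^ (r * (r + 1) / 2) * qbinom q (S + 1) r *
            qbinom q (K + (S + 1) - r) (S + 1)) = 0 := by
        have : ∀ r ∈ range (S + 2),
            (((-1 : ℝ)) ^ r * q ^ (r * (r + 1) / 2) * qbinom q (S + 1) r *
              qbinom q (K + 1 + (S + 1) - r) (S + 1)
            - ((-1 : ℝ)) ^ r * q ^ (r * (r + 1) / 2) * qbinom q (S + 1) r *
              qbinom q (K + (S + 1) - r) (S + 1)) =
            q ^ (K + 1) * (((-1 : ℝ)) ^ r * q ^ (r * (r - 1) / 2) * qbinom q (S + 1) r *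
              qbinom q (K + S + 1 - r) S) := by
          intro r hr
          have e1 : K + 1 + (S + 1) - r = K + S + 2 - r := by omega
          have e2 : K + (S + 1) - r = K + S + 1 - r := by omega
          rw [e1, e2]
          exact diffGU hq S K r
        rw [Finset.sum_congr rfl this, ← Finset.mul_sum, lemB hq S K]
        ring
      rw [Finset.sum_sub_distrib] at hdiff
      rw [show S + 1 + 1 = S + 2 by rfl] at *
      linarith [ihK]

lemma zpow_ne_one' (hq : 0 < q) (hq1 : q ≠ 1) {e : ℤ} (he : e ≠ 0) : q ^ e ≠ 1 := by
  intro h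
  exact he (zpow_right_injective₀ hq hq1 (by simpa using h))

lemma qpoch_succ (a : ℝ) (r : ℕ) : qpoch a q (r + 1) = qpoch a q r * (1 - a * q ^ r) :=
  Finset.prod_range_succ _ _

lemma qpoch_succ' (a : ℝ) (r : ℕ) : qpoch a q (r + 1) = (1 - a) * qpoch (a * q) q r := by
  unfold qpoch
  rw [Finset.prod_range_succ']
  simp only [pow_zero, mul_one, pow_succ]
  rw [mul_comm]
  congr 1
  apply Finset.prod_congr rfl
  intro i _
  ring_nf

lemma qpoch_shift (hq0 : q ≠ 0) (e : ℤ) (r : ℕ) :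
    (1 - q ^ e) * qpoch (q ^ (e + 1)) q r = qpoch (q ^ e) q r * (1 - q ^ (e + r)) := by
  have h1 : qpoch (q ^ e) q (r + 1) = (1 - q ^ e) * qpoch (q ^ (e + 1)) q r := by
    rw [qpoch_succ']
    congr 2
    rw [zpow_add_one₀ hq0]
  have h2 : qpoch (q ^ e) q (r + 1) = qpoch (q ^ e) q r * (1 - q ^ (e + r)) := by
    rw [qpoch_succ]
    congr 2
    rw [zpow_add₀ hq0, zpow_natCast]
  rw [← h1, h2]

lemma qpoch_zero_of_lt (hq0 : q ≠ 0) {J r : ℕ} (h : J < r) : qpoch (q ^ (-(J : ℤ))) q r = 0 := by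
  apply Finset.prod_eq_zero (Finset.mem_range.2 h)
  rw [← zpow_natCast q J, ← zpow_add₀ hq0]
  simp

lemma qpoch_ne_zero_of_neg (hq : 0 < q) (hq1 : q ≠ 1) {e : ℤ} {r : ℕ} (h : e + r ≤ 0) :
    qpoch (q ^ e) q r ≠ 0 := by
  rw [qpoch, Finset.prod_ne_zero_iff]
  intro i hi
  rw [Finset.mem_range] at hi
  rw [← zpow_natCast q i, ← zpow_add₀ (ne_of_gt hq)]
  intro hcon
  have : q ^ (e + i) = 1 := by linarith
  exact zpow_ne_one' hq hq1 (by omega) this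

lemma qpoch_q_ne_zero (hq : 0 < q) (hq1 : q ≠ 1) (r : ℕ) : qpoch q q r ≠ 0 := by
  rw [qpoch, Finset.prod_ne_zero_iff]
  intro i hi hcon
  have : q * q ^ i = q ^ ((i + 1 : ℕ) : ℤ) := by
    rw [zpow_natCast]
    ring
  rw [this] at hcon
  have : q ^ ((i + 1 : ℕ) : ℤ) = 1 := by linarith
  exact zpow_ne_one' hq hq1 (by omega) this

lemma one_sub_pow (j : ℕ) : (1 : ℝ) - q ^ j = (1 - q) * qint q j := by
  have := qint_mul (q := q) j
  nlinarith [this]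

lemma qpoch_q_eq (r : ℕ) : qpoch q q r = (1 - q) ^ r * qfact q r := by
  induction r with
  | zero => simp [qpoch, qfact]
  | succ r ih =>
    rw [qpoch_succ, ih, qfact_succ]
    have : (1 : ℝ) - q * q ^ r = (1 - q) * qint q (r + 1) := by
      rw [← one_sub_pow]
      ring_nf
    rw [this]
    ring

lemma qpoch_fact (hq : 0 < q) {J r : ℕ} (h : r ≤ J) :
    qpoch (q ^ (-(J : ℤ))) q r * qfact q (J - r) =
    (-1 : ℝ) ^ r * q ^ (((r * (r - 1) / 2 : ℕ) : ℤ) - (J : ℤ) * r) * (1 - q) ^ r * qfact q J := by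
  have hq0 : q ≠ 0 := ne_of_gt hq
  induction r with
  | zero => simp [qpoch]
  | succ r ih =>
    have hr : r ≤ J := by omega
    have key : (1 : ℝ) - q ^ (-(J : ℤ)) * q ^ r = -(q ^ ((r : ℤ) - J) * ((1 - q) * qint q (J - r))) := by
      have c1 : q ^ (-(J : ℤ)) * q ^ r = q ^ ((r : ℤ) - J) := by
        rw [← zpow_natCast q r, ← zpow_add₀ hq0]
        congr 1
        ring
      have c2 : q ^ ((r : ℤ) - J) * q ^ (((J - r : ℕ) : ℤ)) = 1 := by
        rw [← zpow_add₀ hq0]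
        have : (r : ℤ) - J + ((J - r : ℕ) : ℤ) = 0 := by omega
        rw [this, zpow_zero]
      have c3 : ((1 : ℝ) - q) * qint q (J - r) = 1 - q ^ (J - r : ℕ) := (one_sub_pow _).symm
      rw [c1, c3]
      have c4 : q ^ ((J - r : ℕ)) = q ^ (((J - r : ℕ) : ℤ)) := by rw [zpow_natCast]
      rw [c4]
      linear_combination -c2
    rw [qpoch_succ, mul_comm (qpoch (q ^ (-(J : ℤ))) q r) (1 - q ^ (-(J : ℤ)) * q ^ r)]
    have e1 : J - r = (J - (r + 1)) + 1 := by omega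
    calc (1 - q ^ (-(J : ℤ)) * q ^ r) * qpoch (q ^ (-(J : ℤ))) q r * qfact q (J - (r + 1))
        = (1 - q ^ (-(J : ℤ)) * q ^ r) / qint q (J - r) * (qpoch (q ^ (-(J : ℤ))) q r * qfact q (J - r)) := by
          rw [e1, qfact_succ, ← e1]
          have hne : qint q (J - r) ≠ 0 := by
            have : qfact q (J - r) ≠ 0 := qfact_ne_zero hq _
            rw [e1, qfact_succ, ← e1] at this
            intro hz
            exact this (by rw [hz]; ring)
          field_simp
      _ = _ := by
          rw [ih hr, key]
          have hne : qint q (J - r) ≠ 0 := by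
            have : qfact q (J - r) ≠ 0 := qfact_ne_zero hq _
            rw [e1, qfact_succ, ← e1] at this
            intro hz
            exact this (by rw [hz]; ring)
          have hN : (r + 1) * (r + 1 - 1) / 2 = r * (r - 1) / 2 + r := by
            simp only [Nat.add_sub_cancel]
            rw [Nat.mul_comm]
            exact tri r
          have ee : q ^ ((r : ℤ) - J) * q ^ (((r * (r - 1) / 2 : ℕ) : ℤ) - (J : ℤ) * r) =
              q ^ ((((r + 1) * (r + 1 - 1) / 2 : ℕ) : ℤ) - (J : ℤ) * ((r + 1 : ℕ) : ℤ)) := by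
            rw [hN, ← zpow_add₀ hq0]
            congr 1
            rw [Nat.cast_add, Nat.cast_add_one]
            ring
          have simp1 : (-(q ^ ((r : ℤ) - J) * ((1 - q) * qint q (J - r)))) / qint q (J - r)
              = -(q ^ ((r : ℤ) - J) * (1 - q)) := by
            field_simp
          rw [div_mul_eq_mul_div, mul_comm, mul_div_assoc, simp1, ← ee]
          ring

lemma qpoch_one_zero {r : ℕ} (hr : 1 ≤ r) : qpoch 1 q r = 0 := by
  obtain ⟨s, rfl⟩ := Nat.exists_eq_add_of_le hr
  rw [add_comm, qpoch_succ']
  simp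

lemma sumA (hq : 0 < q) (hq1 : q ≠ 1) (n r : ℕ) :
    ∀ m : ℕ, 2 * m ≤ n →
    ∑ x ∈ range (m + 1), qbinom q n x * q ^ x *
        (qint q (n - 2 * x + 1) / qint q (n - x + 1)) *
        (qpoch (q ^ (-(x : ℤ))) q r * qpoch (q ^ ((x : ℤ) - n - 1)) q r)
      = qbinom q n m * (qpoch (q ^ (-(m : ℤ))) q r * qpoch (q ^ ((m : ℤ) - n)) q r) := by
  have hq0 : q ≠ 0 := ne_of_gt hq
  intro m
  induction m with
  | zero =>
    intro _
    rw [Finset.sum_range_one]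
    simp only [Nat.cast_zero, neg_zero, zpow_zero, Nat.mul_zero, Nat.sub_zero, pow_zero]
    rw [div_self (qint_ne_zero hq (by omega))]
    rcases Nat.eq_zero_or_pos r with rfl | hr
    · simp [qpoch]
    · rw [qpoch_one_zero hr]
      ring
  | succ m ih =>
    intro h2m
    have h2m' : 2 * m ≤ n := by omega
    rw [Finset.sum_range_succ, ih h2m']
    -- rewrite the new term's pieces
    have en1 : n - 2 * (m + 1) + 1 = n - 2 * m - 1 := by omega
    have en2 : n - (m + 1) + 1 = n - m := by omega
    have ec1 : (-(((m + 1) : ℕ) : ℤ)) = (-(m : ℤ) - 1) := by push_cast; ring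
    have ec2 : ((((m + 1) : ℕ) : ℤ) - n - 1) = ((m : ℤ) - n) := by push_cast; ring
    rw [en1, en2, ec1, ec2]
    -- abbreviations
    set B1 := qbinom q n m with hB1def
    set B2 := qbinom q n (m + 1) with hB2def
    set P1 := qpoch (q ^ (-(m : ℤ) - 1)) q r with hP1
    set P2 := qpoch (q ^ ((m : ℤ) - n)) q r with hP2
    set Pm := qpoch (q ^ (-(m : ℤ))) q r with hPm
    -- goal: B1 * (Pm * P2) + B2 * q^(m+1) * (qint (n-2m-1)/qint (n-m)) * (P1 * P2)
    --     = B2 * (P1 * qpoch (q^((m+1:ℕ):ℤ - n)) q r)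
    have ec3 : ((((m + 1) : ℕ) : ℤ) - n) = ((m : ℤ) - n) + 1 := by push_cast; ring
    rw [ec3]
    set P3 := qpoch (q ^ (((m : ℤ) - n) + 1)) q r with hP3
    -- shift identities
    have sh1 : (1 - q ^ (-(m : ℤ) - 1)) * Pm = P1 * (1 - q ^ (-(m : ℤ) - 1 + r)) := by
      have := qpoch_shift (q := q) hq0 (-(m : ℤ) - 1) r
      rw [show (-(m : ℤ) - 1 + 1) = -(m : ℤ) by ring] at this
      rw [hP1, hPm]
      exact this
    have sh2 : (1 - q ^ ((m : ℤ) - n)) * P3 = P2 * (1 - q ^ ((m : ℤ) - n + r)) := by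
      have := qpoch_shift (q := q) hq0 ((m : ℤ) - n) r
      rw [hP2, hP3]
      exact this
    -- power abbreviations
    set a := q ^ m with ha
    set b := q ^ n with hb
    set t := q ^ r with ht
    have ha0 : a ≠ 0 := pow_ne_zero _ hq0
    have hb0 : b ≠ 0 := pow_ne_zero _ hq0
    have hq1' : q - 1 ≠ 0 := sub_ne_zero.2 hq1
    have hqm1 : (1:ℝ) - q = -(q - 1) := by ring
    -- zpow rewrites
    have w1 : q ^ (-(m : ℤ) - 1 + r) = t / (a * q) := by
      rw [show (-(m : ℤ) - 1 + r) = (r : ℤ) - ((m : ℤ) + 1) by ring, zpow_sub₀ hq0,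
        zpow_add₀ hq0, zpow_natCast, zpow_natCast, zpow_one]
    have w2 : q ^ ((m : ℤ) - n) = a / b := by
      rw [zpow_sub₀ hq0, zpow_natCast, zpow_natCast]
    have w3 : q ^ (-(m : ℤ) - 1) = 1 / (a * q) := by
      rw [show (-(m : ℤ) - 1) = (0 : ℤ) - ((m : ℤ) + 1) by ring, zpow_sub₀ hq0,
        zpow_add₀ hq0, zpow_natCast, zpow_one, zpow_zero]
    have w4 : q ^ ((m : ℤ) - n + r) = a * t / b := by
      rw [show ((m : ℤ) - n + r) = ((m : ℤ) + r) - n by ring, zpow_sub₀ hq0,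
        zpow_add₀ hq0, zpow_natCast, zpow_natCast, zpow_natCast]
    -- qint rewrites
    have i1 : qint q (m + 1) * (q - 1) = a * q - 1 := by
      rw [qint_mul, ha, ← pow_succ]
    have i2 : qint q (n - m) * (q - 1) * a = b - a := by
      rw [qint_mul]
      have h5 : q ^ (n - m) * a = b := by
        rw [ha, hb, ← pow_add]
        congr 1
        omega
      ring_nf
      ring_nf at h5
      linear_combination h5
    have i3 : qint q (n - 2 * m - 1) * (q - 1) * (a * a * q) = b - a * a * q := by
      rw [qint_mul]
      have h5 : q ^ (n - 2 * m - 1) * (a * a * q) = b := by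
        rw [ha, hb, show q ^ m * q ^ m * q = q ^ (m + m + 1) by ring, ← pow_add]
        congr 1
        omega
      ring_nf
      ring_nf at h5
      linear_combination h5
    have hi2ne : qint q (n - m) ≠ 0 := qint_ne_zero hq (by omega)
    have hrec : B2 * qint q (m + 1) = B1 * qint q (n - m) :=
      qbinom_succ_mul hq (by omega)
    -- polynomial relation between B1 and B2
    have hrel : B1 * (b - a) = B2 * (a * q - 1) * a := by
      have h6 : B2 * (qint q (m + 1) * (q - 1)) * a = B1 * (qint q (n - m) * (q - 1) * a) := by
        linear_combination hrec * ((q - 1) * a)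
      rw [i1, i2] at h6
      linarith [h6]
    have hba' : b - a ≠ 0 := by
      rw [sub_ne_zero, hb, ha]
      intro hcon
      have := zpow_ne_one' hq hq1 (show ((n : ℤ) - m) ≠ 0 by omega)
      apply this
      rw [zpow_sub₀ hq0, zpow_natCast, zpow_natCast, ← hcon]
      field_simp
    have hB1ex : B1 = B2 * (a * q - 1) * a / (b - a) := by
      rw [eq_div_iff hba']
      exact hrel
    -- the division-cleared scalar identity
    set u := qint q (n - 2 * m - 1) with hu
    set v := qint q (n - m) with hv
    have dagger : B1 * (1 - q ^ (-(m : ℤ) - 1 + r)) * (1 - q ^ ((m : ℤ) - n)) * v +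
        B2 * q ^ (m + 1) * u * (1 - q ^ (-(m : ℤ) - 1)) * (1 - q ^ ((m : ℤ) - n)) =
        B2 * (1 - q ^ (-(m : ℤ) - 1)) * (1 - q ^ ((m : ℤ) - n + r)) * v := by
      have hv' : v = (b - a) / ((q - 1) * a) := by
        rw [eq_div_iff (by exact mul_ne_zero hq1' ha0), ← i2]
        ring
      have hu' : u = (b - a * a * q) / ((q - 1) * (a * a * q)) := by
        rw [eq_div_iff (by positivity), ← i3]
        ring
      rw [w1, w2, w3, w4, hv', hu', hB1ex, pow_succ, ← ha]
      field_simp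
      ring
    have hvne : v ≠ 0 := hi2ne
    have c1ne : (1 : ℝ) - q ^ (-(m : ℤ) - 1) ≠ 0 := by
      rw [sub_ne_zero]
      exact fun h => zpow_ne_one' hq hq1 (by omega) h.symm
    have c2ne : (1 : ℝ) - q ^ ((m : ℤ) - n) ≠ 0 := by
      rw [sub_ne_zero]
      exact fun h => zpow_ne_one' hq hq1 (by omega) h.symm
    have hterm : B2 * q ^ (m + 1) * (u / v) * (P1 * P2) * v = B2 * q ^ (m + 1) * u * (P1 * P2) := by
      field_simp
    apply mul_right_cancel₀
      (mul_ne_zero hvne (mul_ne_zero c1ne c2ne))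
    linear_combination sh1 * (B1 * P2 * v * (1 - q ^ ((m : ℤ) - n))) +
      hterm * ((1 - q ^ (-(m : ℤ) - 1)) * (1 - q ^ ((m : ℤ) - n))) +
      dagger * (P1 * P2) -
      sh2 * (B2 * P1 * v * (1 - q ^ (-(m : ℤ) - 1)))

lemma qpoch_fact_nat (hq : 0 < q) {J r : ℕ} (h : r ≤ J) :
    qpoch (q ^ (-(J : ℤ))) q r * (qfact q (J - r) * q ^ (J * r)) =
    (-1 : ℝ) ^ r * q ^ (r * (r - 1) / 2) * (1 - q) ^ r * qfact q J := by
  have hq0 : q ≠ 0 := ne_of_gt hq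
  have key : q ^ (((r * (r - 1) / 2 : ℕ) : ℤ) - (J : ℤ) * r) * q ^ (J * r) =
      q ^ (r * (r - 1) / 2) := by
    rw [← zpow_natCast q (J * r), ← zpow_natCast q (r * (r - 1) / 2), ← zpow_add₀ hq0]
    congr 1
    push_cast
    ring
  calc qpoch (q ^ (-(J : ℤ))) q r * (qfact q (J - r) * q ^ (J * r))
      = (qpoch (q ^ (-(J : ℤ))) q r * qfact q (J - r)) * q ^ (J * r) := by ring
    _ = ((-1 : ℝ) ^ r * q ^ (((r * (r - 1) / 2 : ℕ) : ℤ) - (J : ℤ) * r) * (1 - q) ^ r *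
          qfact q J) * q ^ (J * r) := by rw [qpoch_fact hq h]
    _ = (-1 : ℝ) ^ r * (q ^ (((r * (r - 1) / 2 : ℕ) : ℤ) - (J : ℤ) * r) * q ^ (J * r)) *
          (1 - q) ^ r * qfact q J := by ring
    _ = _ := by rw [key]

lemma qpoch_fact_div (hq : 0 < q) {J r : ℕ} (h : r ≤ J) :
    qpoch (q ^ (-(J : ℤ))) q r =
    (-1 : ℝ) ^ r * q ^ (r * (r - 1) / 2) * (1 - q) ^ r * qfact q J /
      (qfact q (J - r) * q ^ (J * r)) := by
  have hq0 : q ≠ 0 := ne_of_gt hq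
  rw [eq_div_iff (mul_ne_zero (qfact_ne_zero hq _) (pow_ne_zero _ hq0))]
  exact qpoch_fact_nat hq h

lemma term_conv (hq : 0 < q) (hq1 : q ≠ 1) {M N r : ℕ} (hrM : r ≤ M) (hrN : r ≤ N) :
    (qpoch (q ^ (-(M : ℤ))) q r * qpoch (q ^ (-(N : ℤ))) q r * q ^ r) /
      (qpoch q q r * qpoch (q ^ (-(M : ℤ) - N)) q r) =
    (-1 : ℝ) ^ r * q ^ (r * (r + 1) / 2) * qbinom q N r * qbinom q (M + N - r) N /
      qbinom q (M + N) M := by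
  have hq0 : q ≠ 0 := ne_of_gt hq
  have h1q : (1 : ℝ) - q ≠ 0 := by
    intro h
    exact hq1 (by linarith)
  have hMN : q ^ (-(M : ℤ) - N) = q ^ (-(((M + N) : ℕ) : ℤ)) := by
    congr 1
    push_cast
    ring
  rw [hMN, qpoch_fact_div hq hrM, qpoch_fact_div hq hrN,
    qpoch_fact_div hq (show r ≤ M + N by omega), qpoch_q_eq,
    qbinom_of_le hrN, qbinom_of_le (show N ≤ M + N - r by omega),
    qbinom_of_le (show M ≤ M + N by omega),
    show M + N - r - N = M - r by omega, show M + N - M = N by omega,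
    tri r, pow_add]
  have f1 := qfact_ne_zero hq (M - r)
  have f2 := qfact_ne_zero hq (N - r)
  have f3 := qfact_ne_zero hq (M + N - r)
  have f4 := qfact_ne_zero hq (M + N)
  have f5 := qfact_ne_zero hq M
  have f6 := qfact_ne_zero hq N
  have f7 := qfact_ne_zero hq r
  have g1 : q ^ (M * r) ≠ 0 := pow_ne_zero _ hq0
  have g2 : q ^ (N * r) ≠ 0 := pow_ne_zero _ hq0
  have g3 : q ^ ((M + N) * r) ≠ 0 := pow_ne_zero _ hq0
  have g4 : (1 - q) ^ r ≠ 0 := pow_ne_zero _ h1q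
  have g5 : ((-1 : ℝ)) ^ r ≠ 0 := pow_ne_zero _ (by norm_num)
  field_simp
  ring

/-- **Theorem 2.2, second part (total mass one).**
For real `q > 0`, `q ≠ 1` and parameters `(n,m,k,l)` as in the context,
`Σ_{x=0}^{m} p(x;q) = 1`. -/
theorem total_mass_one (q : ℝ) (hq : 0 < q) (hq1 : q ≠ 1)
    (n m k l : ℕ) (hm : m ≤ n / 2) (hk : k ≤ n)
    (hl : m + k ≤ n + l) (hlm : l ≤ m) (hlk : l ≤ k) :
    ∑ x ∈ Finset.range (m + 1), pq q n m k l x = 1 := by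
  have hq0 : q ≠ 0 := ne_of_gt hq
  set M := m - l with hM
  set N := n + l - m - k with hN
  have h2m : 2 * m ≤ n := by omega
  have hMm : M ≤ m := by omega
  have hMNnk : M + N = n - k := by omega
  have hCnm : qbinom q n m ≠ 0 := qbinom_ne_zero hq (by omega)
  set CC := qbinom q (n - k) M with hCC
  set Cnm := qbinom q n m with hCnmdef
  set E : ℕ → ℝ := fun r =>
    (qpoch (q ^ (-(M : ℤ))) q r * qpoch (q ^ (-(N : ℤ))) q r * q ^ r) /
      (qpoch q q r * qpoch (q ^ (-(m : ℤ))) q r * qpoch (q ^ ((m : ℤ) - n)) q r *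
        qpoch (q ^ (-(M : ℤ) - N)) q r) with hE
  set T : ℕ → ℝ := fun r =>
    (qpoch (q ^ (-(M : ℤ))) q r * qpoch (q ^ (-(N : ℤ))) q r * q ^ r) /
      (qpoch q q r * qpoch (q ^ (-(M : ℤ) - N)) q r) with hT
  set W : ℕ → ℝ := fun x =>
    qbinom q n x * q ^ x * (qint q (n - 2 * x + 1) / qint q (n - x + 1)) with hW
  set P : ℕ → ℕ → ℝ := fun x r =>
    qpoch (q ^ (-(x : ℤ))) q r * qpoch (q ^ ((x : ℤ) - n - 1)) q r with hP
  -- step 1: per-x rewrite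
  have hpq : ∀ x ∈ range (m + 1), pq q n m k l x =
      (CC / Cnm) * ∑ r ∈ range (m + 1), (W x * P x r) * E r := by
    intro x hx
    rw [Finset.mem_range] at hx
    have hext : ∑ r ∈ Finset.range (min x (min M N) + 1),
        hypTerm q n m M N (-(x : ℤ)) ((x : ℤ) - n - 1) r =
        ∑ r ∈ Finset.range (m + 1), hypTerm q n m M N (-(x : ℤ)) ((x : ℤ) - n - 1) r := by
      apply Finset.sum_subset
      · exact Finset.range_subset_range.2 (by omega)
      · intro r hr hnr
        rw [Finset.mem_range] at hr hnr
        push_neg at hnr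
        unfold hypTerm
        rcases show x < r ∨ M < r ∨ N < r by omega with hc | hc | hc
        · rw [qpoch_zero_of_lt hq0 hc]
          simp
        · rw [qpoch_zero_of_lt hq0 hc]
          simp
        · rw [qpoch_zero_of_lt hq0 hc]
          simp
    have hsplit : ∀ r ∈ range (m + 1),
        hypTerm q n m M N (-(x : ℤ)) ((x : ℤ) - n - 1) r = P x r * E r := by
      intro r _
      unfold hypTerm
      simp only [hP, hE]
      ring
    unfold pq
    rw [← hM, ← hN, hext, Finset.sum_congr rfl hsplit]
    rw [show ∑ r ∈ range (m + 1), P x r * E r =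
      ∑ r ∈ range (m + 1), P x r * E r from rfl]
    have : ∑ r ∈ range (m + 1), (W x * P x r) * E r =
        W x * ∑ r ∈ range (m + 1), P x r * E r := by
      rw [Finset.mul_sum]
      exact Finset.sum_congr rfl (fun r _ => by ring)
    rw [this, hW]
    ring
  rw [Finset.sum_congr rfl hpq, ← Finset.mul_sum]
  -- step 2: swap sums
  have hswap : ∑ x ∈ range (m + 1), ∑ r ∈ range (m + 1), (W x * P x r) * E r =
      ∑ r ∈ range (m + 1), (∑ x ∈ range (m + 1), W x * P x r) * E r := by
    rw [Finset.sum_comm]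
    exact Finset.sum_congr rfl (fun r _ => by rw [Finset.sum_mul])
  rw [hswap]
  -- step 3: apply sumA
  have hA : ∀ r ∈ range (m + 1), (∑ x ∈ range (m + 1), W x * P x r) * E r = Cnm * T r := by
    intro r hr
    rw [Finset.mem_range] at hr
    have hsum : ∑ x ∈ range (m + 1), W x * P x r =
        Cnm * (qpoch (q ^ (-(m : ℤ))) q r * qpoch (q ^ ((m : ℤ) - n)) q r) := by
      rw [← sumA hq hq1 n r m h2m]
    rw [hsum]
    set u := qpoch (q ^ (-(m : ℤ))) q r with hu
    set v := qpoch (q ^ ((m : ℤ) - n)) q r with hv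
    have hune : u ≠ 0 := qpoch_ne_zero_of_neg hq hq1 (by omega)
    have hvne : v ≠ 0 := qpoch_ne_zero_of_neg hq hq1 (by omega)
    simp only [hE, hT]
    set A := qpoch (q ^ (-(M : ℤ))) q r * qpoch (q ^ (-(N : ℤ))) q r * q ^ r with hA2
    set B1 := qpoch q q r with hB1
    set B4 := qpoch (q ^ (-(M : ℤ) - N)) q r with hB4
    have hd : B1 * u * v * B4 = (B1 * B4) * (u * v) := by ring
    rw [hd, ← div_div]
    have hc : A / (B1 * B4) / (u * v) * (u * v) = A / (B1 * B4) :=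
      div_mul_cancel₀ _ (mul_ne_zero hune hvne)
    calc Cnm * (u * v) * (A / (B1 * B4) / (u * v))
        = Cnm * (A / (B1 * B4) / (u * v) * (u * v)) := by ring
      _ = Cnm * (A / (B1 * B4)) := by rw [hc]
  rw [Finset.sum_congr rfl hA, ← Finset.mul_sum]
  -- step 4: shrink range to min M N + 1
  have hshrink : ∑ r ∈ range (m + 1), T r = ∑ r ∈ range (min M N + 1), T r := by
    symm
    apply Finset.sum_subset
    · exact Finset.range_subset_range.2 (by omega)
    · intro r hr hnr
      rw [Finset.mem_range] at hr hnr
      push_neg at hnr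
      simp only [hT]
      rcases show M < r ∨ N < r by omega with hc | hc
      · rw [qpoch_zero_of_lt hq0 hc]
        simp
      · rw [qpoch_zero_of_lt hq0 hc]
        simp
  rw [hshrink]
  -- step 5: convert terms
  have hconv : ∀ r ∈ range (min M N + 1), T r =
      (-1 : ℝ) ^ r * q ^ (r * (r + 1) / 2) * qbinom q N r * qbinom q (M + N - r) N /
        qbinom q (M + N) M := by
    intro r hr
    rw [Finset.mem_range] at hr
    exact term_conv hq hq1 (by omega) (by omega)
  rw [Finset.sum_congr rfl hconv, ← Finset.sum_div]
  -- step 6: extend to range (N+1) and apply lemA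
  have hext2 : ∑ r ∈ range (min M N + 1),
      (-1 : ℝ) ^ r * q ^ (r * (r + 1) / 2) * qbinom q N r * qbinom q (M + N - r) N =
      ∑ r ∈ range (N + 1),
      (-1 : ℝ) ^ r * q ^ (r * (r + 1) / 2) * qbinom q N r * qbinom q (M + N - r) N := by
    apply Finset.sum_subset
    · exact Finset.range_subset_range.2 (by omega)
    · intro r hr hnr
      rw [Finset.mem_range] at hr hnr
      push_neg at hnr
      rw [qbinom_of_gt (show M + N - r < N by omega)]
      ring
  rw [hext2, lemA hq N M]
  -- step 7: finish
  have hCCnk : CC = qbinom q (M + N) M := by rw [hCC, hMNnk]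
  rw [hCCnk]
  have : qbinom q (M + N) M ≠ 0 := qbinom_ne_zero hq (by omega)
  field_simp

end Aux
end

section
/- (Total mass one for q = 1; Theorem 4.2, second part) For every parameter tuple (n,m,k,l) as in the context, one has Σ_{x=0}^{m} p(x) = 1. -/
open Finset

/-- The raising factorial `(a)_r = a(a+1)⋯(a+r-1)`, as a rational number. -/
def raise (a : ℤ) (r : ℕ) : ℚ := ∏ i ∈ Finset.range r, ((a : ℚ) + i)



lemma raise_zero (a : ℤ) : raise a 0 = 1 := by simp [raise]

lemma raise_succ (a : ℤ) (r : ℕ) : raise a (r+1) = raise a r * ((a:ℚ) + r) := by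
  simp [raise, Finset.prod_range_succ]

lemma raise_succ' (a : ℤ) (r : ℕ) : raise a (r+1) = (a:ℚ) * raise (a+1) r := by
  unfold raise
  rw [Finset.prod_range_succ']
  have h : ∀ i ∈ Finset.range r, ((a:ℚ) + ((i+1 : ℕ) : ℚ)) = (((a+1 : ℤ)):ℚ) + (i : ℚ) := by
    intro i _; push_cast; ring
  rw [Finset.prod_congr rfl h]
  push_cast; ring

lemma raise_congr {a b : ℤ} (r : ℕ) (h : a = b) : raise a r = raise b r := by rw [h]

lemma raise_nat_lt_eq_zero (x r : ℕ) (h : x < r) : raise (-(x:ℤ)) r = 0 := by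
  apply Finset.prod_eq_zero (Finset.mem_range.2 h)
  push_cast; ring

lemma raise_neg_ne_zero (m r : ℕ) (h : r ≤ m) : raise (-(m:ℤ)) r ≠ 0 := by
  unfold raise
  rw [Finset.prod_ne_zero_iff]
  intro i hi
  have hi' : i < r := Finset.mem_range.1 hi
  have : (i:ℚ) < (m:ℚ) := by exact_mod_cast lt_of_lt_of_le hi' h
  intro hc
  push_cast at hc
  linarith

lemma raise_sub_ne_zero (m n r : ℕ) (h : m + r ≤ n) : raise ((m:ℤ) - n) r ≠ 0 := by
  unfold raise
  rw [Finset.prod_ne_zero_iff]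
  intro i hi
  have hi' : i < r := Finset.mem_range.1 hi
  have h1 : (m:ℚ) + i < (n:ℚ) := by
    have : m + i < n := by omega
    exact_mod_cast this
  intro hc
  push_cast at hc
  linarith

lemma raise_neg_nat (M r : ℕ) (h : r ≤ M) :
    raise (-(M:ℤ)) r = (-1)^r * (r.factorial : ℚ) * (M.choose r : ℚ) := by
  induction r with
  | zero => simp [raise]
  | succ rr ih =>
    have hrr : rr ≤ M := Nat.le_of_succ_le h
    have hc : (M.choose (rr+1) : ℚ) * ((rr:ℚ)+1) = (M.choose rr : ℚ) * ((M:ℚ) - rr) := by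
      have h1 := Nat.choose_succ_right_eq M rr
      have h2 := congrArg (Nat.cast : ℕ → ℚ) h1
      push_cast [Nat.cast_sub hrr] at h2
      linarith [h2]
    rw [raise_succ, ih hrr]
    push_cast [Nat.factorial_succ]
    linear_combination ((-1:ℚ)^rr * (rr.factorial:ℚ)) * hc

lemma tele (n r : ℕ) (m : ℕ) (hmn : m ≤ n) :
    ∑ x ∈ Finset.range (m+1), (n.choose x : ℚ) * (((n:ℚ) - 2*x + 1)/((n:ℚ) - x + 1)) *
      (raise (-(x:ℤ)) r * raise ((x:ℤ) - n - 1) r)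
    = (n.choose m : ℚ) * (raise (-(m:ℤ)) r * raise ((m:ℤ) - n) r) := by
  induction m with
  | zero =>
    rw [Finset.sum_range_one]
    rcases r with _ | rr
    · simp only [raise_zero, Nat.cast_zero]
      rw [show (n:ℚ) - 2*0 + 1 = (n:ℚ)+1 by ring, show (n:ℚ) - 0 + 1 = (n:ℚ)+1 by ring,
        div_self (by positivity)]
      ring
    · have h0 : raise (-((0:ℕ)):ℤ) (rr+1) = 0 := raise_nat_lt_eq_zero 0 (rr+1) (by omega)
      push_cast at h0 ⊢
      rw [h0]
      ring
  | succ m ih =>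
    have hmn' : m ≤ n := by omega
    rw [Finset.sum_range_succ, ih hmn']
    have hnm : ((n:ℚ) - (m:ℚ)) ≠ 0 := by
      have : (m:ℚ) < (n:ℚ) := by exact_mod_cast (by omega : m < n)
      linarith
    have hc : ((n.choose (m+1)):ℚ) * ((m:ℚ)+1) = (n.choose m : ℚ) * ((n:ℚ) - m) := by
      have h1 := Nat.choose_succ_right_eq n m
      have h2 := congrArg (Nat.cast : ℕ → ℚ) h1
      push_cast [Nat.cast_sub hmn'] at h2
      linarith [h2]
    have hstep : ((n.choose (m+1)):ℚ) * ((n:ℚ) - 2*((m:ℚ)+1) + 1) *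
        (raise (-((m+1:ℕ)):ℤ) r * raise (((m+1:ℕ):ℤ) - n - 1) r)
        = ((n.choose (m+1) : ℚ) * (raise (-((m+1:ℕ)):ℤ) r * raise (((m+1:ℕ):ℤ) - n) r)
          - (n.choose m : ℚ) * (raise (-(m:ℤ)) r * raise ((m:ℤ) - n) r)) * ((n:ℚ) - m) := by
      rcases r with _ | rr
      · simp only [raise_zero]
        linear_combination (-1 : ℚ) * hc
      · have e1 : raise (-(m:ℤ)) (rr+1) = raise (-(m:ℤ)) rr * (-(m:ℚ) + rr) := by
          rw [raise_succ]; push_cast; ring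
        have e2 : raise ((m:ℤ) - n) (rr+1) = ((m:ℚ) - n) * raise ((m:ℤ) - n + 1) rr := by
          rw [raise_succ']; push_cast; ring
        have e3 : raise (-((m+1:ℕ)):ℤ) (rr+1) = (-(m:ℚ) - 1) * raise (-(m:ℤ)) rr := by
          rw [raise_succ', raise_congr rr (show -((m+1:ℕ):ℤ) + 1 = -(m:ℤ) by push_cast; ring)]
          push_cast; ring
        have e4 : raise (((m+1:ℕ):ℤ) - n - 1) (rr+1) = ((m:ℚ) - n) * raise ((m:ℤ) - n + 1) rr := by
          rw [raise_congr (rr+1) (show ((m+1:ℕ):ℤ) - n - 1 = (m:ℤ) - n by push_cast; ring), raise_succ']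
          push_cast; ring
        have e5 : raise (((m+1:ℕ):ℤ) - n) (rr+1) = raise ((m:ℤ) - n + 1) rr * ((m:ℚ) - n + 1 + rr) := by
          rw [raise_congr (rr+1) (show ((m+1:ℕ):ℤ) - n = (m:ℤ) - n + 1 by push_cast; ring), raise_succ]
          push_cast; ring
        rw [e1, e2, e3, e4, e5]
        linear_combination (((rr:ℚ) - m) * ((n:ℚ) - m) * raise (-(m:ℤ)) rr * raise ((m:ℤ) - n + 1) rr) * hc
    have hq : ((n:ℚ) - ((m+1:ℕ):ℚ) + 1) = (n:ℚ) - m := by push_cast; ring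
    calc (n.choose m : ℚ) * (raise (-(m:ℤ)) r * raise ((m:ℤ) - n) r)
          + (n.choose (m+1) : ℚ) * (((n:ℚ) - 2*((m+1:ℕ):ℚ) + 1)/((n:ℚ) - ((m+1:ℕ):ℚ) + 1)) *
            (raise (-((m+1:ℕ)):ℤ) r * raise (((m+1:ℕ):ℤ) - n - 1) r)
        = (n.choose m : ℚ) * (raise (-(m:ℤ)) r * raise ((m:ℤ) - n) r)
          + ((n.choose (m+1) : ℚ) * ((n:ℚ) - 2*((m:ℚ)+1) + 1) *
            (raise (-((m+1:ℕ)):ℤ) r * raise (((m+1:ℕ):ℤ) - n - 1) r)) / ((n:ℚ) - m) := by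
          rw [hq]; push_cast; ring
      _ = (n.choose m : ℚ) * (raise (-(m:ℤ)) r * raise ((m:ℤ) - n) r)
          + ((n.choose (m+1) : ℚ) * (raise (-((m+1:ℕ)):ℤ) r * raise (((m+1:ℕ):ℤ) - n) r)
            - (n.choose m : ℚ) * (raise (-(m:ℤ)) r * raise ((m:ℤ) - n) r)) := by
          rw [hstep, mul_div_assoc, div_self hnm, mul_one]
      _ = (n.choose (m+1) : ℚ) * (raise (-((m+1:ℕ)):ℤ) r * raise (((m+1:ℕ):ℤ) - n) r) := by ring


def fCV (M N : ℕ) : ℚ :=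
  ∑ r ∈ Finset.range (N+1), (-1:ℚ)^r * (N.choose r : ℚ) * ((M + N - r).choose N : ℚ)

lemma fCV_zero_right (M : ℕ) : fCV M 0 = 1 := by simp [fCV]

lemma fCV_zero_left (N : ℕ) : fCV 0 N = 1 := by
  rw [fCV]
  rw [Finset.sum_eq_single_of_mem 0 (Finset.mem_range.2 (by omega))]
  · simp
  · intro r hr hr0
    have h1 : r ≤ N := by have := Finset.mem_range.1 hr; omega
    have h2 : 0 + N - r < N := by omega
    rw [Nat.choose_eq_zero_of_lt h2]
    simp

lemma fCV_rec (M N : ℕ) : fCV (M+1) (N+1) + fCV M N = fCV M (N+1) + fCV (M+1) N := by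
  have key1 : fCV (M+1) (N+1) = fCV M (N+1) +
      ∑ r ∈ Finset.range (N+2), (-1:ℚ)^r * ((N+1).choose r : ℚ) * ((M+N+1-r).choose N : ℚ) := by
    rw [fCV, fCV, ← Finset.sum_add_distrib]
    apply Finset.sum_congr rfl
    intro r hr
    have hr' : r < N+2 := Finset.mem_range.1 hr
    have h1 : M+1+(N+1)-r = (M+N+1-r)+1 := by omega
    have h2 : M+(N+1)-r = M+N+1-r := by omega
    rw [h1, h2, Nat.choose_succ_succ']
    push_cast
    ring
  have key2 : ∑ r ∈ Finset.range (N+2), (-1:ℚ)^r * ((N+1).choose r : ℚ) * ((M+N+1-r).choose N : ℚ)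
      = fCV (M+1) N - fCV M N := by
    rw [Finset.sum_range_succ']
    have key2a : ∀ r ∈ Finset.range (N+1),
        (-1:ℚ)^(r+1) * ((N+1).choose (r+1) : ℚ) * ((M+N+1-(r+1)).choose N : ℚ)
        = -((-1:ℚ)^r * (N.choose r : ℚ) * ((M+N-r).choose N : ℚ))
          - ((-1:ℚ)^r * (N.choose (r+1) : ℚ) * ((M+N-r).choose N : ℚ)) := by
      intro r hr
      have h3 : M+N+1-(r+1) = M+N-r := by omega
      rw [h3, Nat.choose_succ_succ]
      push_cast
      ring
    rw [Finset.sum_congr rfl key2a]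
    have key2b : ∑ r ∈ Finset.range (N+1), (-1:ℚ)^r * (N.choose (r+1) : ℚ) * ((M+N-r).choose N : ℚ)
        = ((M+N+1).choose N : ℚ) - fCV (M+1) N := by
      have hf : fCV (M+1) N =
          (∑ r ∈ Finset.range N, (-1:ℚ)^(r+1) * (N.choose (r+1) : ℚ) * ((M+1+N-(r+1)).choose N : ℚ))
          + (-1:ℚ)^0 * (N.choose 0 : ℚ) * ((M+1+N-0).choose N : ℚ) := by
        rw [fCV, Finset.sum_range_succ']
      have hL : ∑ r ∈ Finset.range (N+1), (-1:ℚ)^r * (N.choose (r+1) : ℚ) * ((M+N-r).choose N : ℚ)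
          = ∑ r ∈ Finset.range N, (-1:ℚ)^r * (N.choose (r+1) : ℚ) * ((M+N-r).choose N : ℚ) := by
        rw [Finset.sum_range_succ, Nat.choose_succ_self]
        simp
      have hcongr : ∀ r ∈ Finset.range N,
          (-1:ℚ)^(r+1) * (N.choose (r+1) : ℚ) * ((M+1+N-(r+1)).choose N : ℚ)
          = -((-1:ℚ)^r * (N.choose (r+1) : ℚ) * ((M+N-r).choose N : ℚ)) := by
        intro r hr
        have h4 : M+1+N-(r+1) = M+N-r := by omega
        rw [h4]
        push_cast
        ring
      have h7 : M+1+N-0 = M+N+1 := by omega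
      rw [hL, hf, Finset.sum_congr rfl hcongr, Finset.sum_neg_distrib, h7]
      simp only [pow_zero, Nat.choose_zero_right, Nat.cast_one, one_mul]
      ring
    have h6 : ∑ r ∈ Finset.range (N+1), -((-1:ℚ)^r * (N.choose r : ℚ) * ((M+N-r).choose N : ℚ))
        = -(fCV M N) := by
      rw [Finset.sum_neg_distrib, fCV]
    have h5 : M+N+1-0 = M+N+1 := by omega
    rw [Finset.sum_sub_distrib, key2b, h6, h5]
    simp only [pow_zero, Nat.choose_zero_right, Nat.cast_one, one_mul]
    ring
  rw [key1, key2]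
  ring

lemma fCV_eq_one : ∀ N M : ℕ, fCV M N = 1 := by
  intro N
  induction N with
  | zero => intro M; exact fCV_zero_right M
  | succ N ihN =>
    intro M
    induction M with
    | zero => exact fCV_zero_left (N+1)
    | succ M ihM =>
      have := fCV_rec M N
      have h1 := ihN M
      have h2 := ihN (M+1)
      linarith

lemma choose_prod_eq (M N r : ℕ) (hrM : r ≤ M) :
    ((M+N).choose M : ℚ) * (M.choose r : ℚ) = ((M+N).choose r : ℚ) * ((M+N-r).choose N : ℚ) := by
  have h1 : M ≤ M + N := by omega
  have h2 : r ≤ M + N := by omega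
  have h3 : N ≤ M + N - r := by omega
  rw [Nat.cast_choose ℚ h1, Nat.cast_choose ℚ hrM, Nat.cast_choose ℚ h2, Nat.cast_choose ℚ h3]
  rw [show M + N - M = N by omega, show M + N - r - N = M - r by omega]
  have f1 : (Nat.factorial (M+N) : ℚ) ≠ 0 := by exact_mod_cast (Nat.factorial_pos _).ne'
  have f2 : (Nat.factorial M : ℚ) ≠ 0 := by exact_mod_cast (Nat.factorial_pos _).ne'
  have f3 : (Nat.factorial N : ℚ) ≠ 0 := by exact_mod_cast (Nat.factorial_pos _).ne'
  have f4 : (Nat.factorial r : ℚ) ≠ 0 := by exact_mod_cast (Nat.factorial_pos _).ne'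
  have f5 : (Nat.factorial (M-r) : ℚ) ≠ 0 := by exact_mod_cast (Nat.factorial_pos _).ne'
  have f6 : (Nat.factorial (M+N-r) : ℚ) ≠ 0 := by exact_mod_cast (Nat.factorial_pos _).ne'
  field_simp

lemma cv (M N : ℕ) :
    ((M+N).choose M : ℚ) * ∑ r ∈ Finset.range (min M N + 1),
      (raise (-(M:ℤ)) r * raise (-(N:ℤ)) r) / ((r.factorial : ℚ) * raise (-(M:ℤ) - N) r) = 1 := by
  have hext : ∑ r ∈ Finset.range (min M N + 1),
      (raise (-(M:ℤ)) r * raise (-(N:ℤ)) r) / ((r.factorial : ℚ) * raise (-(M:ℤ) - N) r)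
      = ∑ r ∈ Finset.range (N + 1),
      (raise (-(M:ℤ)) r * raise (-(N:ℤ)) r) / ((r.factorial : ℚ) * raise (-(M:ℤ) - N) r) := by
    apply Finset.sum_subset (Finset.range_subset_range.2 (by omega))
    intro r hr hnr
    have h1 : M < r := by
      have ha := Finset.mem_range.1 hr
      have hb : ¬ (r < min M N + 1) := fun h => hnr (Finset.mem_range.2 h)
      omega
    rw [raise_nat_lt_eq_zero M r h1, zero_mul, zero_div]
  rw [hext, Finset.mul_sum]
  have hterm : ∀ r ∈ Finset.range (N+1),
      ((M+N).choose M : ℚ) * ((raise (-(M:ℤ)) r * raise (-(N:ℤ)) r) /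
        ((r.factorial : ℚ) * raise (-(M:ℤ) - N) r))
      = (-1:ℚ)^r * (N.choose r : ℚ) * ((M+N-r).choose N : ℚ) := by
    intro r hr
    have hrN : r ≤ N := by have := Finset.mem_range.1 hr; omega
    rcases le_or_gt r M with hrM | hrM
    · have hMN : r ≤ M + N := by omega
      have eMN : raise (-(M:ℤ) - N) r = raise (-((M+N : ℕ) : ℤ)) r :=
        raise_congr r (by push_cast; ring)
      rw [raise_neg_nat M r hrM, raise_neg_nat N r hrN, eMN, raise_neg_nat (M+N) r hMN]
      have hfac : (r.factorial : ℚ) ≠ 0 := by exact_mod_cast (Nat.factorial_pos _).ne'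
      have hch : ((M+N).choose r : ℚ) ≠ 0 := by
        exact_mod_cast (Nat.choose_pos hMN).ne'
      have hden : (r.factorial : ℚ) * ((-1:ℚ)^r * (r.factorial : ℚ) * ((M+N).choose r : ℚ)) ≠ 0 := by
        apply mul_ne_zero hfac
        apply mul_ne_zero (mul_ne_zero (pow_ne_zero _ (by norm_num)) hfac) hch
      rw [← mul_div_assoc, div_eq_iff hden]
      linear_combination ((-1:ℚ)^r * (-1:ℚ)^r * (r.factorial : ℚ)^2 * (N.choose r : ℚ)) *
        choose_prod_eq M N r hrM
    · rw [raise_nat_lt_eq_zero M r hrM, Nat.choose_eq_zero_of_lt (show M+N-r < N by omega)]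
      simp
  rw [Finset.sum_congr rfl hterm]
  exact fCV_eq_one N M

/-- The `r`-th term of the terminating balanced `₄F₃`-series with numerator parameters
`a, b, -M, -N` and denominator parameters `-m, m-n, -M-N`, evaluated at `1`. -/
def hgTerm (n m M N : ℕ) (a b : ℤ) (r : ℕ) : ℚ :=
  (raise a r * raise b r * raise (-(M : ℤ)) r * raise (-(N : ℤ)) r) /
    ((Nat.factorial r : ℚ) * raise (-(m : ℤ)) r * raise ((m : ℤ) - n) r *
      raise (-(M : ℤ) - N) r)

/-- The `q → 1` limit function `p(x) = p(x | n,m,k,l)` of (4.1), with `M = m - l` and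
`N = n - m - k + l`: a Racah polynomial value times a positive factor. -/
def pone (n m k l x : ℕ) : ℚ :=
  (Nat.choose (n - k) (m - l) : ℚ) * ((Nat.choose n x : ℚ) / (Nat.choose n m : ℚ)) *
    (((n : ℚ) - 2 * x + 1) / ((n : ℚ) - x + 1)) *
    ∑ r ∈ Finset.range (min x (min (m - l) (n + l - m - k)) + 1),
      hgTerm n m (m - l) (n + l - m - k) (-(x : ℤ)) ((x : ℤ) - n - 1) r

/-- **Theorem 4.2, second part (total mass one for `q = 1`).**
For every parameter tuple `(n,m,k,l)` as in the context, `Σ_{x=0}^{m} p(x) = 1`. -/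
theorem total_mass_one_q_one
    (n m k l : ℕ) (hm : m ≤ n / 2) (hk : k ≤ n)
    (hl : m + k ≤ n + l) (hlm : l ≤ m) (hlk : l ≤ k) :
    ∑ x ∈ Finset.range (m + 1), pone n m k l x = 1 := by
  set M := m - l with hM
  set N := n + l - m - k with hN
  have h2m : 2 * m ≤ n := by omega
  have hmn : m ≤ n := by omega
  have hMm : M ≤ m := by omega
  have hMN : M + N = n - k := by omega
  have hCnm : ((n.choose m : ℚ)) ≠ 0 := by
    exact_mod_cast (Nat.choose_pos hmn).ne'
  set R := min M N with hR
  -- step 1: rewrite each pone term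
  have hpone : ∀ x ∈ Finset.range (m+1), pone n m k l x
      = ((n-k).choose M : ℚ) / (n.choose m : ℚ) * ∑ r ∈ Finset.range (R+1),
          ((n.choose x : ℚ) * (((n:ℚ) - 2*x + 1)/((n:ℚ) - x + 1)) *
            (raise (-(x:ℤ)) r * raise ((x:ℤ) - n - 1) r)) *
          ((raise (-(M:ℤ)) r * raise (-(N:ℤ)) r) /
            ((r.factorial:ℚ) * raise (-(m:ℤ)) r * raise ((m:ℤ)-n) r * raise (-(M:ℤ)-N) r)) := by
    intro x hx
    rw [pone]
    simp only [← hM, ← hN]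
    have hsub : Finset.range (min x R + 1) ⊆ Finset.range (R+1) :=
      Finset.range_subset_range.2 (by omega)
    have hzero : ∀ r ∈ Finset.range (R+1), r ∉ Finset.range (min x R + 1) →
        hgTerm n m M N (-(x:ℤ)) ((x:ℤ) - n - 1) r = 0 := by
      intro r hr hnr
      have ha := Finset.mem_range.1 hr
      have hb : ¬ (r < min x R + 1) := fun h => hnr (Finset.mem_range.2 h)
      have hxr : x < r := by omega
      rw [hgTerm, raise_nat_lt_eq_zero x r hxr, zero_mul, zero_mul, zero_mul, zero_div]
    rw [Finset.sum_subset hsub hzero, Finset.mul_sum, Finset.mul_sum]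
    apply Finset.sum_congr rfl
    intro r _
    rw [hgTerm]
    ring
  rw [Finset.sum_congr rfl hpone, ← Finset.mul_sum, Finset.sum_comm]
  -- step 2: inner sums via tele
  have hinner : ∀ r ∈ Finset.range (R+1),
      ∑ x ∈ Finset.range (m+1),
        ((n.choose x : ℚ) * (((n:ℚ) - 2*x + 1)/((n:ℚ) - x + 1)) *
          (raise (-(x:ℤ)) r * raise ((x:ℤ) - n - 1) r)) *
        ((raise (-(M:ℤ)) r * raise (-(N:ℤ)) r) /
          ((r.factorial:ℚ) * raise (-(m:ℤ)) r * raise ((m:ℤ)-n) r * raise (-(M:ℤ)-N) r))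
      = (n.choose m : ℚ) * ((raise (-(M:ℤ)) r * raise (-(N:ℤ)) r) /
          ((r.factorial:ℚ) * raise (-(M:ℤ)-N) r)) := by
    intro r hr
    have hrR : r ≤ R := by have := Finset.mem_range.1 hr; omega
    rw [← Finset.sum_mul, tele n r m hmn]
    have h1 : raise (-(m:ℤ)) r ≠ 0 := raise_neg_ne_zero m r (by omega)
    have h2 : raise ((m:ℤ)-n) r ≠ 0 := raise_sub_ne_zero m n r (by omega)
    have hfac : (r.factorial : ℚ) ≠ 0 := by exact_mod_cast (Nat.factorial_pos _).ne'
    have h3 : raise (-(M:ℤ)-N) r ≠ 0 := by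
      rw [raise_congr r (show -(M:ℤ) - N = -((M+N : ℕ) : ℤ) by push_cast; ring)]
      exact raise_neg_ne_zero (M+N) r (by omega)
    field_simp
  rw [Finset.sum_congr rfl hinner, ← Finset.mul_sum]
  rw [show ((n-k).choose M : ℚ) / (n.choose m : ℚ) * ((n.choose m : ℚ) *
      ∑ r ∈ Finset.range (R+1), (raise (-(M:ℤ)) r * raise (-(N:ℤ)) r) /
        ((r.factorial:ℚ) * raise (-(M:ℤ)-N) r))
      = ((n-k).choose M : ℚ) *
      ∑ r ∈ Finset.range (R+1), (raise (-(M:ℤ)) r * raise (-(N:ℤ)) r) /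
        ((r.factorial:ℚ) * raise (-(M:ℤ)-N) r) from by
    field_simp]
  have := cv M N
  rw [hMN] at this
  exact this
end
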